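/- Let 0 < ε ≤ 1/2, let X ⊆ ℝ^d be finite and (k,ε)-irreducible with optimal k-means partition X₁,…,X_k, let 1 ≤ i < k, and let C_i be a set of i centers satisfying the invariant P(i). Then there exists an index j ∈ {i+1,…,k} such that Φ(C_i, X_j) ≥ (ε/(4k))·Φ(C_i, X). -/

import Mathlib

open Finset
open scoped BigOperators
open Classical

noncomputable section

/-- Points of `ℝ^d`. -/
abbrev Pt (d : ℕ) := EuclideanSpace ℝ (Fin d)

/-- `Φ(C, X) = Σ_{x ∈ X} min_{c ∈ C} ‖x - c‖²`. -/
noncomputable def Phi {d : ℕ} (C X : Finset (Pt d)) : ℝ :=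
  ∑ x ∈ X, sInf ((fun c => ‖x - c‖ ^ 2) '' (C : Set (Pt d)))

/-- The centroid `μ(X)` of a finite set of points. -/
noncomputable def ctr {d : ℕ} (X : Finset (Pt d)) : Pt d :=
  (X.card : ℝ)⁻¹ • ∑ x ∈ X, x

/-- `Δ₁(X) = Φ({μ(X)}, X)`. -/
noncomputable def Delta1 {d : ℕ} (X : Finset (Pt d)) : ℝ := Phi {ctr X} X

/-- `Δ_k(X)`: the optimal `k`-means cost of `X`. -/
noncomputable def DeltaK {d : ℕ} (k : ℕ) (X : Finset (Pt d)) : ℝ :=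
  sInf ((fun C => Phi C X) '' {C : Finset (Pt d) | C.card = k})

/-- `X₁, …, X_k` is an optimal `k`-means partition of `X`. -/
def IsOptPartition {d : ℕ} (k : ℕ) (X : Finset (Pt d)) (Xs : Fin k → Finset (Pt d)) : Prop :=
  (∀ j, (Xs j).Nonempty) ∧
  (∀ j l, j ≠ l → Disjoint (Xs j) (Xs l)) ∧
  Finset.univ.biUnion Xs = X ∧
  ∑ j, Delta1 (Xs j) = DeltaK k X

/-- `X` is `(k, ε)`-irreducible: `Δ_{k-1}(X) ≥ (1+ε)·Δ_k(X)`. -/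
def KIrreducible {d : ℕ} (k : ℕ) (ε : ℝ) (X : Finset (Pt d)) : Prop :=
  (1 + ε) * DeltaK k X ≤ DeltaK (k - 1) X

/-- The invariant `P(i)`: `Ci` consists of the centers `c r` for `r < i` (clusters reindexed
so that the covered clusters come first), each `c r` is a `(1 + ε/16)`-good center for the
optimal cluster `Xs r`, and `Φ(Ci, X) > 0`. -/
def InvariantP {d k : ℕ} (ε : ℝ) (X : Finset (Pt d)) (Xs : Fin k → Finset (Pt d))
    (i : ℕ) (c : Fin k → Pt d) (Ci : Finset (Pt d)) : Prop :=
  Ci = Finset.image c (Finset.univ.filter (fun r : Fin k => r.val < i)) ∧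
  (∀ r : Fin k, r.val < i → Phi {c r} (Xs r) ≤ (1 + ε / 16) * Delta1 (Xs r)) ∧
  0 < Phi Ci X

/-
Let `Φ = Φ(C_i, X)`. Since `C_i` has at most `i ≤ k - 1` centers, irreducibility gives
`(1 + ε)·Δ_k(X) ≤ Δ_{k-1}(X) ≤ Φ`. The covered clusters `X_1, …, X_i` cost at most
`(1 + ε/16)·Δ_k(X) ≤ (1 + ε/16)/(1 + ε)·Φ ≤ (1 - ε/4)·Φ`, so the at most `k` uncovered clusters
cost at least `(ε/4)·Φ` together, and one of them costs at least `(ε/(4k))·Φ`.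
-/

lemma Finset.exists_div_le_of_le_sum {ι : Type*} {s : Finset ι} {f : ι → ℝ} {a : ℝ} {n : ℕ}
    (hs : s.Nonempty) (hn : #s ≤ n) (ha : 0 ≤ a) (h : a ≤ ∑ j ∈ s, f j) :
    ∃ j ∈ s, a / n ≤ f j := by
  refine exists_le_of_sum_le hs (le_trans ?_ h)
  have hn0 : (0 : ℝ) < n := by exact_mod_cast hs.card_pos.trans_le hn
  rw [sum_const, nsmul_eq_mul, ← mul_div_assoc, div_le_iff₀ hn0, mul_comm a]
  exact mul_le_mul_of_nonneg_right (Nat.cast_le.2 hn) ha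

section Cost

variable {d : ℕ}

lemma sInf_sqDist_nonneg (C : Finset (Pt d)) (x : Pt d) :
    0 ≤ sInf ((fun c => ‖x - c‖ ^ 2) '' (C : Set (Pt d))) :=
  Real.sInf_nonneg <| by rintro _ ⟨c, -, rfl⟩; positivity

lemma Phi_nonneg (C X : Finset (Pt d)) : 0 ≤ Phi C X :=
  sum_nonneg fun x _ => sInf_sqDist_nonneg C x

lemma Phi_empty (X : Finset (Pt d)) : Phi ∅ X = 0 := by
  simp [Phi, Real.sInf_empty]

lemma Phi_anti {C C' : Finset (Pt d)} (hC : C.Nonempty) (h : C ⊆ C') (X : Finset (Pt d)) :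
    Phi C' X ≤ Phi C X :=
  sum_le_sum fun x _ =>
    csInf_le_csInf ⟨0, by rintro _ ⟨c, -, rfl⟩; positivity⟩
      ((coe_nonempty.2 hC).image _) (Set.image_mono (coe_subset.2 h))

lemma Phi_le_Phi_singleton {C : Finset (Pt d)} {c : Pt d} (hc : c ∈ C) (X : Finset (Pt d)) :
    Phi C X ≤ Phi {c} X :=
  Phi_anti (singleton_nonempty c) (singleton_subset_iff.2 hc) X

lemma Phi_biUnion {ι : Type*} (s : Finset ι) {Xs : ι → Finset (Pt d)}
    (h : (s : Set ι).PairwiseDisjoint Xs) (C : Finset (Pt d)) :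
    Phi C (s.biUnion Xs) = ∑ j ∈ s, Phi C (Xs j) :=
  sum_biUnion h

lemma DeltaK_nonneg (m : ℕ) (X : Finset (Pt d)) : 0 ≤ DeltaK m X :=
  Real.sInf_nonneg <| by rintro _ ⟨C, -, rfl⟩; exact Phi_nonneg C X

/-- If `Pt d` has fewer than `m` points, `Δ_m(X)` is the junk value `sInf ∅ = 0`. -/
lemma DeltaK_le_Phi {C : Finset (Pt d)} {m : ℕ} (hC : C.Nonempty) (hm : #C ≤ m)
    (X : Finset (Pt d)) : DeltaK m X ≤ Phi C X := by
  rcases Set.eq_empty_or_nonempty {D : Finset (Pt d) | #D = m} with hempty | ⟨D, hD⟩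
  · simp only [DeltaK, hempty, Set.image_empty, Real.sInf_empty]
    exact Phi_nonneg C X
  · obtain ⟨C', hCC', -, hC'⟩ := exists_subsuperset_card_eq subset_union_left hm
      (hD.symm.le.trans (card_le_card subset_union_right))
    calc DeltaK m X ≤ Phi C' X :=
          csInf_le ⟨0, by rintro _ ⟨B, -, rfl⟩; exact Phi_nonneg B X⟩ ⟨C', hC', rfl⟩
      _ ≤ Phi C X := Phi_anti hC hCC' X

end Cost

section Partition

variable {d k : ℕ} {X : Finset (Pt d)} {Xs : Fin k → Finset (Pt d)}

lemma IsOptPartition.Phi_eq_sum (hopt : IsOptPartition k X Xs) (C : Finset (Pt d)) :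
    Phi C X = ∑ j, Phi C (Xs j) := by
  rw [← hopt.2.2.1, Phi_biUnion _ (fun a _ b _ hab => hopt.2.1 a b hab)]

variable {ε : ℝ} {i : ℕ} {c : Fin k → Pt d} {Ci : Finset (Pt d)}

lemma InvariantP.nonempty (hinv : InvariantP ε X Xs i c Ci) : Ci.Nonempty := by
  by_contra hempty
  have hpos := hinv.2.2
  rw [not_nonempty_iff_eq_empty.1 hempty, Phi_empty] at hpos
  exact hpos.false

lemma InvariantP.card_le (hinv : InvariantP ε X Xs i c Ci) : #Ci ≤ i := by
  rw [hinv.1]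
  calc #(image c (univ.filter fun r : Fin k => r.val < i))
      ≤ #(univ.filter fun r : Fin k => r.val < i) := card_image_le
    _ ≤ #(range i) := card_le_card_of_injOn Fin.val (fun r hr => by simpa using hr)
        Fin.val_injective.injOn
    _ = i := card_range i

lemma InvariantP.sum_Phi_covered_le (hinv : InvariantP ε X Xs i c Ci)
    (hopt : IsOptPartition k X Xs) (hε : 0 ≤ ε) :
    ∑ r ∈ univ.filter (fun r : Fin k => r.val < i), Phi Ci (Xs r)
      ≤ (1 + ε / 16) * DeltaK k X := by
  have hα : 0 ≤ 1 + ε / 16 := by positivity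
  calc ∑ r ∈ univ.filter (fun r : Fin k => r.val < i), Phi Ci (Xs r)
      ≤ ∑ r ∈ univ.filter (fun r : Fin k => r.val < i), (1 + ε / 16) * Delta1 (Xs r) := by
        refine sum_le_sum fun r hr => ?_
        have hri : r.val < i := (mem_filter.1 hr).2
        have hcr : c r ∈ Ci := hinv.1 ▸ mem_image_of_mem c (mem_filter.2 ⟨mem_univ r, hri⟩)
        exact (Phi_le_Phi_singleton hcr _).trans (hinv.2.1 r hri)
    _ ≤ ∑ r, (1 + ε / 16) * Delta1 (Xs r) :=
        sum_le_sum_of_subset_of_nonneg (filter_subset _ _)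
          fun r _ _ => mul_nonneg hα (Phi_nonneg _ _)
    _ = (1 + ε / 16) * DeltaK k X := by rw [← mul_sum, hopt.2.2.2]

lemma InvariantP.quarter_le_sum_Phi_uncovered (hinv : InvariantP ε X Xs i c Ci)
    (hopt : IsOptPartition k X Xs) (hirr : KIrreducible k ε X) (hε0 : 0 < ε) (hε : ε ≤ 1 / 2)
    (hik : i < k) :
    ε / 4 * Phi Ci X ≤ ∑ r ∈ univ.filter (fun r : Fin k => ¬ r.val < i), Phi Ci (Xs r) := by
  have hlower : (1 + ε) * DeltaK k X ≤ Phi Ci X :=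
    hirr.trans (DeltaK_le_Phi hinv.nonempty (by have := hinv.card_le; omega) X)
  have hcovered := hinv.sum_Phi_covered_le hopt hε0.le
  have hsplit := sum_filter_add_sum_filter_not univ (fun r : Fin k => r.val < i)
    (fun r => Phi Ci (Xs r))
  rw [← hopt.Phi_eq_sum] at hsplit
  -- `(1 - ε/4)(1 + ε) ≥ 1 + ε/16` for `ε ≤ 11/4`
  nlinarith [DeltaK_nonneg k X, mul_nonneg hε0.le (DeltaK_nonneg k X)]

end Partition

theorem stmt_8_general {d k : ℕ} (ε : ℝ) (hε0 : 0 < ε) (hε : ε ≤ 1 / 2)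
    (X : Finset (Pt d)) (hirr : KIrreducible k ε X)
    (Xs : Fin k → Finset (Pt d)) (hopt : IsOptPartition k X Xs)
    (i : ℕ) (hik : i < k)
    (c : Fin k → Pt d) (Ci : Finset (Pt d)) (hinv : InvariantP ε X Xs i c Ci) :
    ∃ j : Fin k, i ≤ j.val ∧ (ε / (4 * k)) * Phi Ci X ≤ Phi Ci (Xs j) := by
  obtain ⟨j, hj, hle⟩ := exists_div_le_of_le_sum (n := k)
    ⟨⟨i, hik⟩, mem_filter.2 ⟨mem_univ _, lt_irrefl i⟩⟩ (card_filter_le _ _ |>.trans (card_fin k).le)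
    (mul_nonneg (by positivity) hinv.2.2.le)
    (hinv.quarter_le_sum_Phi_uncovered hopt hirr hε0 hε hik)
  refine ⟨j, not_lt.1 (mem_filter.1 hj).2, ?_⟩
  calc ε / (4 * k) * Phi Ci X = ε / 4 * Phi Ci X / k := by ring
    _ ≤ Phi Ci (Xs j) := hle

/-- Under the invariant `P(i)` (clusters reindexed so the covered clusters
are `X₁, …, X_i`), there is an uncovered cluster `X_j`, `j ∈ {i+1, …, k}`, with
`Φ(C_i, X_j) ≥ (ε/(4k))·Φ(C_i, X)`. -/
theorem stmt_8 {d k : ℕ} (ε : ℝ) (hε0 : 0 < ε) (hε : ε ≤ 1 / 2)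
    (X : Finset (Pt d)) (hirr : KIrreducible k ε X)
    (Xs : Fin k → Finset (Pt d)) (hopt : IsOptPartition k X Xs)
    (i : ℕ) (hi : 1 ≤ i) (hik : i < k)
    (c : Fin k → Pt d) (Ci : Finset (Pt d)) (hinv : InvariantP ε X Xs i c Ci) :
    ∃ j : Fin k, i ≤ j.val ∧ (ε / (4 * k)) * Phi Ci X ≤ Phi Ci (Xs j) :=
  stmt_8_general ε hε0 hε X hirr Xs hopt i hik c Ci hinv
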